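/- arXiv:1902.00150 — 3 statements merged into one kernel-verified Lean document; each statement's English description precedes it below -/
import Mathlib

section
/- Let T(a,b) = ((1−ε)/ε)·√((σ²+λ²+σ²λ²)/(λ²σ²))·exp(−(σ²a + λ²b)²/(2σ²λ²(σ²+λ²+σ²λ²))) and f(a,b) = (σ²a + λ²b)/(σ²+λ²+σ²λ²). Then the partial derivative of T(a,b)·f(a,b) with respect to a is bounded: |∂/∂a[T(a,b)f(a,b)]| ≤ (2σ²/√ν)·(1−ε)/ε ≤ (2/λ)·(1−ε)/ε, where ν = σ²λ²(σ²+λ²+σ²λ²). -/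
/-!
With `u = σ²a + λ²b` and `S = σ² + λ² + σ²λ²`, the function is `K · u · exp(-u²/(2ν))` where
`K = ((1-ε)/ε) · √(S/(λ²σ²)) / S = ((1-ε)/ε) / √ν`, so its `a`-derivative is
`K σ² · e⁻ˣ (1 - 2x)` with `x = u²/(2ν) ≥ 0`. Since `|1 - 2x| ≤ 2(1 + x) ≤ 2eˣ`, this is at most
`2Kσ²`. The second bound is `√ν ≥ σ²λ`.
-/

open Real

lemma abs_exp_neg_mul_one_sub_two_mul_le {x : ℝ} (hx : 0 ≤ x) :
    |exp (-x) * (1 - 2 * x)| ≤ 2 := by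
  have habs : |1 - 2 * x| ≤ 2 * (x + 1) := abs_le.mpr ⟨by linarith, by linarith⟩
  calc |exp (-x) * (1 - 2 * x)| = exp (-x) * |1 - 2 * x| := by
        rw [abs_mul, abs_of_pos (exp_pos _)]
    _ ≤ exp (-x) * (2 * exp x) := by
        gcongr
        linarith [add_one_le_exp x]
    _ = 2 := by rw [mul_left_comm, ← exp_add, neg_add_cancel, exp_zero, mul_one]

lemma hasDerivAt_mul_exp_neg_sq_div (v t : ℝ) :
    HasDerivAt (fun t => t * exp (-t ^ 2 / (2 * v)))
      (exp (-t ^ 2 / (2 * v)) * (1 - 2 * (t ^ 2 / (2 * v)))) t := by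
  have hexp : HasDerivAt (fun t => exp (-t ^ 2 / (2 * v)))
      (exp (-t ^ 2 / (2 * v)) * (-(2 * t) / (2 * v))) t := by
    simpa using (((hasDerivAt_pow 2 t).neg).div_const (2 * v)).exp
  exact ((hasDerivAt_id' t).mul hexp).congr_deriv (by ring)

lemma sqrt_div_div_self {x : ℝ} (hx : 0 < x) (m : ℝ) : √(x / m) / x = (√(m * x))⁻¹ := by
  have : 0 < √x := sqrt_pos.mpr hx
  rw [sqrt_div hx.le, sqrt_mul' m hx.le]
  nth_rw 2 [← mul_self_sqrt hx.le]
  field_simp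

lemma sq_div_sqrt_mul_le {σ l : ℝ} (hσ : 0 < σ) (hl : 0 < l) :
    σ ^ 2 / √(σ ^ 2 * l ^ 2 * (σ ^ 2 + l ^ 2 + σ ^ 2 * l ^ 2)) ≤ 1 / l := by
  have hle : σ ^ 2 * l ≤ √(σ ^ 2 * l ^ 2 * (σ ^ 2 + l ^ 2 + σ ^ 2 * l ^ 2)) := by
    rw [le_sqrt (by positivity) (by positivity)]
    have : 0 ≤ σ ^ 2 * l ^ 4 + σ ^ 4 * l ^ 4 := by positivity
    linear_combination this
  calc σ ^ 2 / √(σ ^ 2 * l ^ 2 * (σ ^ 2 + l ^ 2 + σ ^ 2 * l ^ 2)) ≤ σ ^ 2 / (σ ^ 2 * l) :=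
        div_le_div_of_nonneg_left (by positivity) (by positivity) hle
    _ = 1 / l := by field_simp

/-- Bound on the partial derivative in a of T(a,b)·f(a,b) for the
Bernoulli-Gaussian denoiser:
|∂/∂a [T f]| ≤ (2σ²/√ν)·(1−ε)/ε ≤ (2/λ)·(1−ε)/ε where ν = σ²λ²(σ²+λ²+σ²λ²). -/
theorem stmt_10 (ε σ l : ℝ) (hε : 0 < ε) (hε1 : ε < 1) (hσ : 0 < σ) (hl : 0 < l) :
    ∀ a b : ℝ,
      |deriv (fun a' : ℝ =>
          (((1 - ε) / ε) * Real.sqrt ((σ ^ 2 + l ^ 2 + σ ^ 2 * l ^ 2) / (l ^ 2 * σ ^ 2)) *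
            Real.exp (-(σ ^ 2 * a' + l ^ 2 * b) ^ 2 /
              (2 * (σ ^ 2 * l ^ 2 * (σ ^ 2 + l ^ 2 + σ ^ 2 * l ^ 2))))) *
          ((σ ^ 2 * a' + l ^ 2 * b) / (σ ^ 2 + l ^ 2 + σ ^ 2 * l ^ 2))) a| ≤
        2 * σ ^ 2 / Real.sqrt (σ ^ 2 * l ^ 2 * (σ ^ 2 + l ^ 2 + σ ^ 2 * l ^ 2)) *
          ((1 - ε) / ε) ∧
      2 * σ ^ 2 / Real.sqrt (σ ^ 2 * l ^ 2 * (σ ^ 2 + l ^ 2 + σ ^ 2 * l ^ 2)) *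
          ((1 - ε) / ε) ≤ 2 / l * ((1 - ε) / ε) := by
  intro a b
  set S := σ ^ 2 + l ^ 2 + σ ^ 2 * l ^ 2
  set ν := σ ^ 2 * l ^ 2 * S
  have hS : 0 < S := by positivity
  have hε' : 0 ≤ (1 - ε) / ε := div_nonneg (by linarith) hε.le
  set K := (1 - ε) / ε * (√(S / (l ^ 2 * σ ^ 2)) / S)
  have hK : K = (1 - ε) / ε / √ν := by
    simp only [K, ν]
    rw [sqrt_div_div_self hS]
    ring_nf
  set g := fun t => t * exp (-t ^ 2 / (2 * ν))
  set u := σ ^ 2 * a + l ^ 2 * b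
  have hfun : (fun a' => (1 - ε) / ε * √(S / (l ^ 2 * σ ^ 2)) *
        exp (-(σ ^ 2 * a' + l ^ 2 * b) ^ 2 / (2 * ν)) * ((σ ^ 2 * a' + l ^ 2 * b) / S))
      = fun a' => K * g (σ ^ 2 * a' + l ^ 2 * b) := by
    funext a'
    simp only [K, g]
    field_simp
  have hu : HasDerivAt (fun a' => σ ^ 2 * a' + l ^ 2 * b) (σ ^ 2) a := by
    simpa using ((hasDerivAt_id a).const_mul (σ ^ 2)).add_const (l ^ 2 * b)
  have hderiv : HasDerivAt (fun a' => K * g (σ ^ 2 * a' + l ^ 2 * b))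
      (K * (exp (-u ^ 2 / (2 * ν)) * (1 - 2 * (u ^ 2 / (2 * ν))) * σ ^ 2)) a :=
    (HasDerivAt.comp (h₂ := g) a (hasDerivAt_mul_exp_neg_sq_div ν u) hu).const_mul K
  have hgauss : |exp (-u ^ 2 / (2 * ν)) * (1 - 2 * (u ^ 2 / (2 * ν)))| ≤ 2 := by
    rw [neg_div]
    exact abs_exp_neg_mul_one_sub_two_mul_le (by positivity)
  constructor
  · rw [hfun, hderiv.deriv, hK, abs_mul, abs_mul, abs_sq,
      abs_of_nonneg (a := (1 - ε) / ε / √ν) (by positivity)]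
    calc (1 - ε) / ε / √ν * (|exp (-u ^ 2 / (2 * ν)) * (1 - 2 * (u ^ 2 / (2 * ν)))| * σ ^ 2)
        ≤ (1 - ε) / ε / √ν * (2 * σ ^ 2) := by gcongr
      _ = 2 * σ ^ 2 / √ν * ((1 - ε) / ε) := by ring
  · rw [mul_div_assoc, ← mul_one_div 2 l]
    gcongr 2 * ?_ * _
    exact sq_div_sqrt_mul_le hσ hl
end

section
/- The Bernoulli-Gaussian denoiser η(a,b) = f(a,b)/(1 + T(a,b)), with f(a,b) = (σ²a + λ²b)/(σ²+λ²+σ²λ²) and T(a,b) = ((1−ε)/ε)·√((σ²+λ²+σ²λ²)/(λ²σ²))·exp(−(σ²a+λ²b)²/(2ν)) where ν = σ²λ²(σ²+λ²+σ²λ²), satisfies |∂η/∂a(a,b)| ≤ 1 + (2/λ)·(1−ε)/ε for all (a,b) ∈ ℝ². -/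
/-!
Writing `u = σ²a + λ²b`, the denoiser is `η = h(u) / S` with `S = σ² + λ² + σ²λ²` and the scalar
shrinkage `h(u) = u / (1 + κ e^{-u²/(2ν)})`, `κ = ((1-ε)/ε) √(S/(λ²σ²))`. Differentiating,
`h'(u) = 1/(1+T) + T u²/(ν (1+T)²)` with `T = κ e^{-u²/(2ν)} ≥ 0`; since `u² e^{-u²/(2ν)} ≤ 2ν`,
`0 ≤ h' ≤ 1 + 2κ`. Hence `|∂η/∂a| = (σ²/S) h'(u) ≤ 1 + 2κσ²/S`, and `κσ²/S = ((1-ε)/ε) σ/(λ√S)`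
is at most `((1-ε)/ε)/λ` because `σ² ≤ S`.
-/

open Real

lemma mul_exp_neg_div_le (x : ℝ) {c : ℝ} (hc : 0 < c) : x * exp (-x / c) ≤ c := by
  have hx : x / c ≤ exp (x / c) := by linarith [add_one_le_exp (x / c)]
  rw [div_le_iff₀ hc] at hx
  calc x * exp (-x / c) ≤ exp (x / c) * c * exp (-x / c) := by gcongr
    _ = c := by rw [neg_div, mul_right_comm, ← exp_add, add_neg_cancel, exp_zero, one_mul]

noncomputable def gaussShrink (κ ν u : ℝ) : ℝ :=
  u / (1 + κ * exp (-u ^ 2 / (2 * ν)))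

section gaussShrink

variable {κ ν : ℝ}

lemma hasDerivAt_gaussShrink (hκ : 0 ≤ κ) (hν : ν ≠ 0) (u : ℝ) :
    HasDerivAt (gaussShrink κ ν)
      (1 / (1 + κ * exp (-u ^ 2 / (2 * ν))) +
        κ * exp (-u ^ 2 / (2 * ν)) * u ^ 2 / (ν * (1 + κ * exp (-u ^ 2 / (2 * ν))) ^ 2)) u := by
  have hT : 0 < 1 + κ * exp (-u ^ 2 / (2 * ν)) := by positivity
  have hden : HasDerivAt (fun v => 1 + κ * exp (-v ^ 2 / (2 * ν)))
      (-(κ * exp (-u ^ 2 / (2 * ν)) * (u / ν))) u := by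
    refine ((((hasDerivAt_pow 2 u).neg.div_const (2 * ν)).exp.const_mul κ).const_add 1).congr_deriv ?_
    simp only [Pi.neg_apply]
    field_simp
    ring
  refine ((hasDerivAt_id u).div hden hT.ne').congr_deriv ?_
  simp only [id]
  field_simp
  ring

lemma deriv_gaussShrink_nonneg (hκ : 0 ≤ κ) (hν : 0 < ν) (u : ℝ) :
    0 ≤ deriv (gaussShrink κ ν) u := by
  rw [(hasDerivAt_gaussShrink hκ hν.ne' u).deriv]
  positivity

lemma deriv_gaussShrink_le (hκ : 0 ≤ κ) (hν : 0 < ν) (u : ℝ) :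
    deriv (gaussShrink κ ν) u ≤ 1 + 2 * κ := by
  rw [(hasDerivAt_gaussShrink hκ hν.ne' u).deriv]
  set E := exp (-u ^ 2 / (2 * ν))
  have hT : 1 ≤ 1 + κ * E := by have := exp_pos (-u ^ 2 / (2 * ν)); nlinarith
  have hpeak : u ^ 2 * E ≤ 2 * ν := mul_exp_neg_div_le _ (by positivity)
  gcongr
  · exact div_le_one_of_le₀ hT (by positivity)
  · calc κ * E * u ^ 2 / (ν * (1 + κ * E) ^ 2) ≤ κ * E * u ^ 2 / ν := by
          gcongr
          exact le_mul_of_one_le_right hν.le (one_le_pow₀ hT)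
      _ = κ * (u ^ 2 * E) / ν := by ring
      _ ≤ κ * (2 * ν) / ν := by gcongr
      _ = 2 * κ := by field_simp

lemma abs_deriv_gaussShrink_affine_div_le (hκ : 0 ≤ κ) (hν : 0 < ν) {p S : ℝ} (hp : 0 ≤ p)
    (hS : 0 < S) (q x : ℝ) :
    |deriv (fun y => gaussShrink κ ν (p * y + q) / S) x| ≤ p / S * (1 + 2 * κ) := by
  have hu : HasDerivAt (fun y => p * y + q) p x := by
    simpa using ((hasDerivAt_id x).const_mul p).add_const q
  have hη : HasDerivAt (fun y => gaussShrink κ ν (p * y + q) / S) _ x :=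
    ((hasDerivAt_gaussShrink hκ hν.ne' _).differentiableAt.hasDerivAt.comp x hu).div_const S
  rw [hη.deriv, abs_of_nonneg (by have := deriv_gaussShrink_nonneg hκ hν (p * x + q); positivity),
    mul_div_assoc, mul_comm]
  gcongr
  exact deriv_gaussShrink_le hκ hν _

end gaussShrink

lemma sq_div_mul_sqrt_div_le {σ l S : ℝ} (hσ : 0 < σ) (hl : 0 < l) (hσS : σ ^ 2 ≤ S) :
    σ ^ 2 / S * √(S / (l ^ 2 * σ ^ 2)) ≤ 1 / l := by
  have hS : 0 < S := (by positivity : (0:ℝ) < σ ^ 2).trans_le hσS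
  have hσ_le : σ ≤ √S := le_sqrt_of_sq_le hσS
  have hsqrt : √(S / (l ^ 2 * σ ^ 2)) = √S / (l * σ) := by
    rw [← mul_pow, sqrt_div hS.le, sqrt_sq (by positivity)]
  rw [hsqrt, div_mul_div_comm, div_le_div_iff₀ (by positivity) hl]
  have := mul_le_mul_of_nonneg_left hσ_le (by positivity : 0 ≤ σ * √S * l)
  linear_combination this + l * σ * mul_self_sqrt hS.le

/-- The Bernoulli-Gaussian denoiser η(a,b) = f(a,b)/(1+T(a,b)) satisfies
|∂η/∂a| ≤ 1 + (2/λ)·(1−ε)/ε. -/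
theorem stmt_11 (ε σ l : ℝ) (hε : 0 < ε) (hε1 : ε < 1) (hσ : 0 < σ) (hl : 0 < l) :
    ∀ a b : ℝ,
      |deriv (fun a' : ℝ =>
          ((σ ^ 2 * a' + l ^ 2 * b) / (σ ^ 2 + l ^ 2 + σ ^ 2 * l ^ 2)) /
            (1 + ((1 - ε) / ε) *
              Real.sqrt ((σ ^ 2 + l ^ 2 + σ ^ 2 * l ^ 2) / (l ^ 2 * σ ^ 2)) *
              Real.exp (-(σ ^ 2 * a' + l ^ 2 * b) ^ 2 /
                (2 * (σ ^ 2 * l ^ 2 * (σ ^ 2 + l ^ 2 + σ ^ 2 * l ^ 2)))))) a| ≤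
        1 + 2 / l * ((1 - ε) / ε) := by
  intro a b
  set S := σ ^ 2 + l ^ 2 + σ ^ 2 * l ^ 2
  set c := (1 - ε) / ε
  set κ := c * √(S / (l ^ 2 * σ ^ 2))
  set ν := σ ^ 2 * l ^ 2 * S
  have hσS : σ ^ 2 ≤ S := by
    have : 0 ≤ l ^ 2 + σ ^ 2 * l ^ 2 := by positivity
    simp only [S]; linarith
  have hc : 0 ≤ c := div_nonneg (by linarith) hε.le
  have hκ : 0 ≤ κ := by positivity
  have hν : 0 < ν := by positivity
  have hκS : σ ^ 2 / S * κ ≤ c / l := by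
    calc σ ^ 2 / S * κ = c * (σ ^ 2 / S * √(S / (l ^ 2 * σ ^ 2))) := by ring
      _ ≤ c * (1 / l) := by gcongr; exact sq_div_mul_sqrt_div_le hσ hl hσS
      _ = c / l := by ring
  have hσS1 : σ ^ 2 / S ≤ 1 := div_le_one_of_le₀ hσS (by positivity)
  have hη := abs_deriv_gaussShrink_affine_div_le hκ hν (sq_nonneg σ) (S := S) (by positivity)
    (l ^ 2 * b) a
  simp only [gaussShrink, div_right_comm _ _ S] at hη
  calc _ ≤ σ ^ 2 / S * (1 + 2 * κ) := hη
    _ = σ ^ 2 / S + 2 * (σ ^ 2 / S * κ) := by ring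
    _ ≤ 1 + 2 * (c / l) := by gcongr
    _ = 1 + 2 / l * c := by ring
end

section
/- The Bernoulli-Gaussian denoiser η (as above) satisfies |∂η/∂b(a,b)| ≤ 1 + (2/σ)·(1−ε)/ε for all (a,b) ∈ ℝ², and hence η is Lipschitz continuous on ℝ². -/
lemma aux_xe {ν x : ℝ} (hν : 0 < ν) (hx : 0 ≤ x) :
    x * Real.exp (-x / (2 * ν)) ≤ ν := by
  have h1 : 1 + x / (4 * ν) ≤ Real.exp (x / (4 * ν)) := by
    have := Real.add_one_le_exp (x / (4 * ν)); linarith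
  have h2 : Real.exp (x / (2 * ν)) = Real.exp (x / (4 * ν)) * Real.exp (x / (4 * ν)) := by
    rw [← Real.exp_add]; ring_nf
  have h0 : (0:ℝ) ≤ 1 + x / (4 * ν) := by positivity
  have h3 : (1 + x / (4 * ν)) * (1 + x / (4 * ν)) ≤ Real.exp (x / (2 * ν)) := by
    rw [h2]; exact mul_le_mul h1 h1 h0 (le_trans h0 h1)
  have h4 : x ≤ ν * Real.exp (x / (2 * ν)) := by
    have h5 := mul_le_mul_of_nonneg_left h3 hν.le
    have h6 : ν * ((1 + x / (4 * ν)) * (1 + x / (4 * ν))) = ν + x / 2 + x ^ 2 / (16 * ν) := by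
      field_simp; ring
    have h7 : ν + x / 2 + x ^ 2 / (16 * ν) - x = (x - 4 * ν) ^ 2 / (16 * ν) := by
      field_simp; ring
    have h8 : (0:ℝ) ≤ (x - 4 * ν) ^ 2 / (16 * ν) := by positivity
    linarith [h5, h6 ▸ h5]
  calc x * Real.exp (-x / (2 * ν))
      ≤ (ν * Real.exp (x / (2 * ν))) * Real.exp (-x / (2 * ν)) :=
        mul_le_mul_of_nonneg_right h4 (Real.exp_pos _).le
    _ = ν := by rw [mul_assoc, ← Real.exp_add]; ring_nf; simp

set_option maxHeartbeats 2000000 in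
/-- The Bernoulli-Gaussian denoiser η(a,b) = f(a,b)/(1+T(a,b)) satisfies
|∂η/∂b| ≤ 1 + (2/σ)·(1−ε)/ε, and hence η is Lipschitz continuous on ℝ²
(w.r.t. the Euclidean norm). -/
theorem stmt_12 (ε σ l : ℝ) (hε : 0 < ε) (hε1 : ε < 1) (hσ : 0 < σ) (hl : 0 < l) :
    (∀ a b : ℝ,
      |deriv (fun b' : ℝ =>
          ((σ ^ 2 * a + l ^ 2 * b') / (σ ^ 2 + l ^ 2 + σ ^ 2 * l ^ 2)) /
            (1 + ((1 - ε) / ε) *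
              Real.sqrt ((σ ^ 2 + l ^ 2 + σ ^ 2 * l ^ 2) / (l ^ 2 * σ ^ 2)) *
              Real.exp (-(σ ^ 2 * a + l ^ 2 * b') ^ 2 /
                (2 * (σ ^ 2 * l ^ 2 * (σ ^ 2 + l ^ 2 + σ ^ 2 * l ^ 2)))))) b| ≤
        1 + 2 / σ * ((1 - ε) / ε)) ∧
    ∃ K : ℝ, 0 < K ∧ ∀ a₁ b₁ a₂ b₂ : ℝ,
      |((σ ^ 2 * a₁ + l ^ 2 * b₁) / (σ ^ 2 + l ^ 2 + σ ^ 2 * l ^ 2)) /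
          (1 + ((1 - ε) / ε) *
            Real.sqrt ((σ ^ 2 + l ^ 2 + σ ^ 2 * l ^ 2) / (l ^ 2 * σ ^ 2)) *
            Real.exp (-(σ ^ 2 * a₁ + l ^ 2 * b₁) ^ 2 /
              (2 * (σ ^ 2 * l ^ 2 * (σ ^ 2 + l ^ 2 + σ ^ 2 * l ^ 2))))) -
        ((σ ^ 2 * a₂ + l ^ 2 * b₂) / (σ ^ 2 + l ^ 2 + σ ^ 2 * l ^ 2)) /
          (1 + ((1 - ε) / ε) *
            Real.sqrt ((σ ^ 2 + l ^ 2 + σ ^ 2 * l ^ 2) / (l ^ 2 * σ ^ 2)) *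
            Real.exp (-(σ ^ 2 * a₂ + l ^ 2 * b₂) ^ 2 /
              (2 * (σ ^ 2 * l ^ 2 * (σ ^ 2 + l ^ 2 + σ ^ 2 * l ^ 2)))))| ≤
        K * Real.sqrt ((a₁ - a₂) ^ 2 + (b₁ - b₂) ^ 2) := by
  have hε' : 0 ≤ (1 - ε) / ε := div_nonneg (by linarith) hε.le
  set c : ℝ := σ ^ 2 + l ^ 2 + σ ^ 2 * l ^ 2 with hc_def
  have hc : 0 < c := by positivity
  set κ : ℝ := (1 - ε) / ε * Real.sqrt (c / (l ^ 2 * σ ^ 2)) with hκ_def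
  have hκ : 0 ≤ κ := mul_nonneg hε' (Real.sqrt_nonneg _)
  set ν : ℝ := σ ^ 2 * l ^ 2 * c with hν_def
  have hν : 0 < ν := by positivity
  set g : ℝ → ℝ := fun s => s / c / (1 + κ * Real.exp (-s ^ 2 / (2 * ν))) with hg_def
  set D : ℝ → ℝ := fun s =>
    (1 + κ * Real.exp (-s ^ 2 / (2 * ν)) + κ * s ^ 2 * Real.exp (-s ^ 2 / (2 * ν)) / ν) /
      (c * (1 + κ * Real.exp (-s ^ 2 / (2 * ν))) ^ 2) with hD_def
  clear_value c κ ν g D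
  -- derivative of g
  have hderiv : ∀ s : ℝ, HasDerivAt g (D s) s := by
    intro s
    have h1 : HasDerivAt (fun s : ℝ => -s ^ 2 / (2 * ν)) (-(2 * s) / (2 * ν)) s := by
      have := ((hasDerivAt_pow 2 s).neg).div_const (2 * ν)
      simpa using this
    have h2 : HasDerivAt (fun s : ℝ => 1 + κ * Real.exp (-s ^ 2 / (2 * ν)))
        (κ * (Real.exp (-s ^ 2 / (2 * ν)) * (-(2 * s) / (2 * ν)))) s :=
      ((h1.exp).const_mul κ).const_add 1
    have h3 : HasDerivAt (fun s : ℝ => s / c) (1 / c) s := by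
      simpa using (hasDerivAt_id s).div_const c
    have hP : (0:ℝ) < 1 + κ * Real.exp (-s ^ 2 / (2 * ν)) := by
      have := mul_nonneg hκ (Real.exp_pos (-s ^ 2 / (2 * ν))).le; linarith
    have h4 := h3.div h2 hP.ne'
    convert h4 using 1
    · rfl
    · rfl
    · rw [hg_def]; rfl
    rw [hD_def]
    field_simp
    ring
  -- bound on the derivative
  have hbound : ∀ s : ℝ, |D s| ≤ (1 + κ) / c := by
    intro s
    simp only [hD_def]
    set E : ℝ := Real.exp (-s ^ 2 / (2 * ν)) with hE_def
    have hE0 : 0 < E := Real.exp_pos _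
    have hP : (1:ℝ) ≤ 1 + κ * E := le_add_of_nonneg_right (mul_nonneg hκ hE0.le)
    have hsE : s ^ 2 * E ≤ ν := aux_xe hν (sq_nonneg s)
    have hterm : κ * s ^ 2 * E / ν ≤ κ := by
      rw [div_le_iff₀ hν]
      calc κ * s ^ 2 * E = κ * (s ^ 2 * E) := by ring
        _ ≤ κ * ν := mul_le_mul_of_nonneg_left hsE hκ
    have hterm0 : 0 ≤ κ * s ^ 2 * E / ν := by positivity
    rw [abs_of_nonneg (by positivity)]
    rw [div_le_div_iff₀ (by positivity) hc]
    have hkey : 1 + κ * E + κ * s ^ 2 * E / ν ≤ (1 + κ) * (1 + κ * E) ^ 2 := by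
      nlinarith [hterm, mul_nonneg hκ hE0.le,
        mul_nonneg (mul_nonneg hκ hκ) hE0.le,
        mul_nonneg (mul_nonneg hκ hκ) (mul_nonneg hE0.le hE0.le),
        mul_nonneg (mul_nonneg (mul_nonneg hκ hκ) hκ) (mul_nonneg hE0.le hE0.le)]
    calc (1 + κ * E + κ * s ^ 2 * E / ν) * c
        ≤ ((1 + κ) * (1 + κ * E) ^ 2) * c := mul_le_mul_of_nonneg_right hkey hc.le
      _ = (1 + κ) * (c * (1 + κ * E) ^ 2) := by ring
  -- final numeric bound : (1+κ)/c * l^2 ≤ 1 + 2/σ * ((1-ε)/ε)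
  have hsqrt : Real.sqrt (c / (l ^ 2 * σ ^ 2)) = Real.sqrt c / (l * σ) := by
    rw [show l ^ 2 * σ ^ 2 = (l * σ) ^ 2 by ring, Real.sqrt_div hc.le,
      Real.sqrt_sq (by positivity)]
  have hlsqrt : l * Real.sqrt c ≤ c := by
    have h1 : l ≤ Real.sqrt c := by
      rw [show l = Real.sqrt (l ^ 2) by rw [Real.sqrt_sq hl.le]]
      exact Real.sqrt_le_sqrt (by nlinarith)
    calc l * Real.sqrt c ≤ Real.sqrt c * Real.sqrt c :=
          mul_le_mul_of_nonneg_right h1 (Real.sqrt_nonneg c)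
      _ = c := Real.mul_self_sqrt hc.le
  have hκl : κ * l ^ 2 / c ≤ 2 / σ * ((1 - ε) / ε) := by
    rw [hκ_def, hsqrt]
    have heq : (1 - ε) / ε * (Real.sqrt c / (l * σ)) * l ^ 2 / c
        = (1 - ε) / ε * (l * Real.sqrt c / (σ * c)) := by
      field_simp
    rw [heq]
    have h1 : l * Real.sqrt c / (σ * c) ≤ 1 / σ := by
      rw [div_le_div_iff₀ (by positivity) hσ]
      calc l * Real.sqrt c * σ ≤ c * σ := by nlinarith [hlsqrt]
        _ = 1 * (σ * c) := by ring
    calc (1 - ε) / ε * (l * Real.sqrt c / (σ * c)) ≤ (1 - ε) / ε * (1 / σ) :=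
          mul_le_mul_of_nonneg_left h1 hε'
      _ ≤ 2 / σ * ((1 - ε) / ε) := by
          have h2σ : (2:ℝ) / σ = 2 * (1 / σ) := by ring
          have hpos : (0:ℝ) ≤ 1 / σ := by positivity
          nlinarith [mul_nonneg hε' hpos]
  have hfinal : (1 + κ) / c * l ^ 2 ≤ 1 + 2 / σ * ((1 - ε) / ε) := by
    have h1 : l ^ 2 / c ≤ 1 := by rw [div_le_one hc]; nlinarith
    have heq : (1 + κ) / c * l ^ 2 = l ^ 2 / c + κ * l ^ 2 / c := by ring
    rw [heq]; linarith [hκl]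
  constructor
  · intro a b
    have hlin : HasDerivAt (fun b' : ℝ => σ ^ 2 * a + l ^ 2 * b') (l ^ 2) b := by
      simpa using ((hasDerivAt_id b).const_mul (l ^ 2)).const_add (σ ^ 2 * a)
    have h5 : HasDerivAt (fun b' : ℝ => g (σ ^ 2 * a + l ^ 2 * b'))
        (D (σ ^ 2 * a + l ^ 2 * b) * l ^ 2) b :=
      HasDerivAt.comp b (hderiv (σ ^ 2 * a + l ^ 2 * b)) hlin
    have hfun : (fun b' : ℝ =>
        ((σ ^ 2 * a + l ^ 2 * b') / c) /
          (1 + κ * Real.exp (-(σ ^ 2 * a + l ^ 2 * b') ^ 2 / (2 * ν))))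
        = (fun b' : ℝ => g (σ ^ 2 * a + l ^ 2 * b')) := by
      funext b'; simp only [hg_def]
    rw [hfun, h5.deriv, abs_mul, abs_of_nonneg (by positivity : (0:ℝ) ≤ l ^ 2)]
    calc |D (σ ^ 2 * a + l ^ 2 * b)| * l ^ 2 ≤ (1 + κ) / c * l ^ 2 := by
          gcongr; exact hbound _
      _ ≤ 1 + 2 / σ * ((1 - ε) / ε) := hfinal
  · refine ⟨(1 + κ) / c * (σ ^ 2 + l ^ 2), by positivity, ?_⟩
    intro a₁ b₁ a₂ b₂
    have hg_lip : ∀ s₁ s₂ : ℝ, |g s₁ - g s₂| ≤ (1 + κ) / c * |s₁ - s₂| := by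
      intro s₁ s₂
      have := Convex.norm_image_sub_le_of_norm_hasDerivWithin_le
        (f := g) (f' := D) (s := Set.univ) (C := (1 + κ) / c)
        (fun x _ => (hderiv x).hasDerivWithinAt)
        (fun x _ => by rw [Real.norm_eq_abs]; exact hbound x)
        convex_univ (Set.mem_univ s₂) (Set.mem_univ s₁)
      simpa [Real.norm_eq_abs] using this
    have key := hg_lip (σ ^ 2 * a₁ + l ^ 2 * b₁) (σ ^ 2 * a₂ + l ^ 2 * b₂)
    have hsdiff : |(σ ^ 2 * a₁ + l ^ 2 * b₁) - (σ ^ 2 * a₂ + l ^ 2 * b₂)|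
        ≤ (σ ^ 2 + l ^ 2) * Real.sqrt ((a₁ - a₂) ^ 2 + (b₁ - b₂) ^ 2) := by
      have ha : |a₁ - a₂| ≤ Real.sqrt ((a₁ - a₂) ^ 2 + (b₁ - b₂) ^ 2) := by
        rw [← Real.sqrt_sq_eq_abs]
        exact Real.sqrt_le_sqrt (by nlinarith [sq_nonneg (b₁ - b₂)])
      have hb : |b₁ - b₂| ≤ Real.sqrt ((a₁ - a₂) ^ 2 + (b₁ - b₂) ^ 2) := by
        rw [← Real.sqrt_sq_eq_abs]
        exact Real.sqrt_le_sqrt (by nlinarith [sq_nonneg (a₁ - a₂)])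
      calc |(σ ^ 2 * a₁ + l ^ 2 * b₁) - (σ ^ 2 * a₂ + l ^ 2 * b₂)|
          = |σ ^ 2 * (a₁ - a₂) + l ^ 2 * (b₁ - b₂)| := by ring_nf
        _ ≤ |σ ^ 2 * (a₁ - a₂)| + |l ^ 2 * (b₁ - b₂)| := abs_add_le _ _
        _ = σ ^ 2 * |a₁ - a₂| + l ^ 2 * |b₁ - b₂| := by
            rw [abs_mul, abs_mul, abs_of_nonneg (by positivity : (0:ℝ) ≤ σ ^ 2),
              abs_of_nonneg (by positivity : (0:ℝ) ≤ l ^ 2)]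
        _ ≤ σ ^ 2 * Real.sqrt ((a₁ - a₂) ^ 2 + (b₁ - b₂) ^ 2)
              + l ^ 2 * Real.sqrt ((a₁ - a₂) ^ 2 + (b₁ - b₂) ^ 2) := by
            gcongr
        _ = (σ ^ 2 + l ^ 2) * Real.sqrt ((a₁ - a₂) ^ 2 + (b₁ - b₂) ^ 2) := by ring
    have he₁ : ((σ ^ 2 * a₁ + l ^ 2 * b₁) / c) /
          (1 + κ * Real.exp (-(σ ^ 2 * a₁ + l ^ 2 * b₁) ^ 2 / (2 * ν)))
        = g (σ ^ 2 * a₁ + l ^ 2 * b₁) := by simp only [hg_def]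
    have he₂ : ((σ ^ 2 * a₂ + l ^ 2 * b₂) / c) /
          (1 + κ * Real.exp (-(σ ^ 2 * a₂ + l ^ 2 * b₂) ^ 2 / (2 * ν)))
        = g (σ ^ 2 * a₂ + l ^ 2 * b₂) := by simp only [hg_def]
    rw [he₁, he₂]
    calc |g (σ ^ 2 * a₁ + l ^ 2 * b₁) - g (σ ^ 2 * a₂ + l ^ 2 * b₂)|
        ≤ (1 + κ) / c * |(σ ^ 2 * a₁ + l ^ 2 * b₁) - (σ ^ 2 * a₂ + l ^ 2 * b₂)| := key
      _ ≤ (1 + κ) / c * ((σ ^ 2 + l ^ 2) * Real.sqrt ((a₁ - a₂) ^ 2 + (b₁ - b₂) ^ 2)) := by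
          gcongr
      _ = (1 + κ) / c * (σ ^ 2 + l ^ 2) * Real.sqrt ((a₁ - a₂) ^ 2 + (b₁ - b₂) ^ 2) := by
          ring
end
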